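/- Let v1 ≥ v2 > 0 and let m be a positive integer. A strategy profile (X, Y) with E(X) = E(Y) = m is a Nash equilibrium of the two-player all-pay auction with valuations (v1, v2) if and only if: (a) either m = ⌊v2/2⌋ = ⌊v1/2⌋, or m = ⌈v2/2⌉ − 1 = ⌈v1/2⌉ − 1, or m = ⌊v2/2⌋ = ⌈v1/2⌉ − 1; and (b) X = λ·U_O^m + (1−λ)·U_E^m and Y = κ·U_O^m + (1−κ)·U_E^m, where κ = (2m/v1)·(m + 1 − v1/2) and λ = (2m/v2)·(m + 1 − v2/2). In this case the equilibrium payoffs are P_{v1}(X, Y) = v1/2 − m and P_{v2}(Y, X) = v2/2 − m. -/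

import Mathlib

open scoped BigOperators

/-- A (mixed) strategy: a probability distribution on the nonnegative
integers with finite expectation. -/
structure Strategy where
  p : ℕ → ℝ
  nonneg : ∀ n, 0 ≤ p n
  total : HasSum p 1
  finExp : Summable fun n : ℕ => (n : ℝ) * p n

namespace Strategy

/-- Expectation of a strategy. -/
noncomputable def exp (ξ : Strategy) : ℝ := ∑' n : ℕ, (n : ℝ) * ξ.p n

end Strategy

/-- Probability that an observation from `ξ` strictly exceeds an independent
observation from `η`. -/
noncomputable def prGT (ξ η : Strategy) : ℝ :=
  ∑' n, ξ.p n * ∑ k ∈ Finset.range n, η.p k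

/-- Probability that independent observations from `ξ` and `η` are equal. -/
noncomputable def prEq (ξ η : Strategy) : ℝ := ∑' n, ξ.p n * η.p n

/-- Expected all-pay auction payoff of a player with valuation `v` playing `ξ`
against `η`:  `v·Pr(X > Y) + (v/2)·Pr(X = Y) − E(X)`. -/
noncomputable def payoff (v : ℝ) (ξ η : Strategy) : ℝ :=
  v * prGT ξ η + v / 2 * prEq ξ η - ξ.exp

/-- Nash equilibrium of the two-player all-pay auction with valuations `(v1, v2)`. -/
def IsNashAPA (v1 v2 : ℝ) (X Y : Strategy) : Prop :=
  (∀ X' : Strategy, payoff v1 X' Y ≤ payoff v1 X Y) ∧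
  (∀ Y' : Strategy, payoff v2 Y' X ≤ payoff v2 Y X)

/-- `H(ξ, η) = Pr(X > Y) − Pr(X < Y)`. -/
noncomputable def Hval (ξ η : Strategy) : ℝ := prGT ξ η - prGT η ξ

/-- Nash equilibrium of the discrete General Lotto game `Γ(b1, b2)`. -/
def IsNashLotto (b1 b2 : ℝ) (X Y : Strategy) : Prop :=
  X.exp = b1 ∧ Y.exp = b2 ∧
  (∀ X' : Strategy, X'.exp = b1 → Hval X' Y ≤ Hval X Y) ∧
  (∀ Y' : Strategy, Y'.exp = b2 → Hval Y' X ≤ Hval Y X)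

/-- `U_O^m`: uniform distribution on the odd numbers `{1, 3, …, 2m−1}` (as a pmf). -/
noncomputable def UO (m : ℕ) : ℕ → ℝ := fun n =>
  if Odd n ∧ n < 2 * m then (m : ℝ)⁻¹ else 0

/-- `U_E^m`: uniform distribution on the even numbers `{0, 2, …, 2m}` (as a pmf). -/
noncomputable def UE (m : ℕ) : ℕ → ℝ := fun n =>
  if Even n ∧ n ≤ 2 * m then ((m : ℝ) + 1)⁻¹ else 0

/-- `U_{O↑1}^m`: uniform distribution on the even numbers `{2, 4, …, 2m−2}` (as a pmf). -/
noncomputable def UOup (m : ℕ) : ℕ → ℝ := fun n =>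
  if Even n ∧ 0 < n ∧ n ≤ 2 * m - 2 then ((m : ℝ) - 1)⁻¹ else 0

/-- `δ_j`: the point mass at `j` (as a pmf). -/
noncomputable def deltaFn (j : ℕ) : ℕ → ℝ := fun n => if n = j then 1 else 0

/-- `W_j^m = (1/(2m))·δ_0 + Σ_{i=1}^{j−1}(1/m)·δ_{2i} + (1/(2m))·δ_{2j}
      + Σ_{i=j+1}^{m}(1/m)·δ_{2i−1}` (as a pmf). -/
noncomputable def Wfn (j m : ℕ) : ℕ → ℝ := fun n =>
  if n = 0 ∨ n = 2 * j then (2 * (m : ℝ))⁻¹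
  else if Even n ∧ n < 2 * j then (m : ℝ)⁻¹
  else if Odd n ∧ 2 * j < n ∧ n < 2 * m then (m : ℝ)⁻¹
  else 0

/-- `V_j^m = Σ_{i=1}^{j−1}(2/(2m+1))·δ_{2i−1} + (1/(2m+1))·δ_{2j−1}
      + Σ_{i=j}^{m}(2/(2m+1))·δ_{2i}` (as a pmf). -/
noncomputable def Vfn (j m : ℕ) : ℕ → ℝ := fun n =>
  if n = 2 * j - 1 then (2 * (m : ℝ) + 1)⁻¹
  else if Odd n ∧ n < 2 * j - 1 then 2 * (2 * (m : ℝ) + 1)⁻¹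
  else if Even n ∧ 2 * j ≤ n ∧ n ≤ 2 * m then 2 * (2 * (m : ℝ) + 1)⁻¹
  else 0

/-!
Against `η`, the pure bid `n` earns `bidPayoff v η n = v·Pr(Y < n) + (v/2)·Pr(Y = n) − n`, and a
strategy is a best response iff no pure bid earns more than it. If `E(Y) = m`, the bids
`0, …, 2m` earn on average `v/2 − m` plus a nonnegative overshoot term that vanishes iff
`Y ≤ 2m` almost surely. Hence in equilibrium each player earns at least `vᵢ/2 − m`; as the
normalized payoffs `(payoff + E)/v` are winning probabilities summing to one, both bounds are
attained. Then every bid in `{0, …, 2m}` earns exactly `v/2 − m`, and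
`bidPayoff (n+1) − bidPayoff n = (v/2)(p n + p (n+1)) − 1` forces the distribution that alternates
between `1 − 2m/v` and `(2m+2)/v − 1`, i.e. the stated mixture of `U_E^m` and `U_O^m`. Its
nonnegativity and the bid `2m + 1` give `2m ≤ v ≤ 2m + 2`, which is the floor/ceiling condition.
-/

open Finset Filter Topology

namespace Strategy

variable (η : Strategy)

/-- The strict distribution function `Pr(Y < n)`. -/
noncomputable def cdf (n : ℕ) : ℝ := ∑ k ∈ range n, η.p k

theorem summable_p : Summable η.p := η.total.summable

theorem cdf_zero : η.cdf 0 = 0 := sum_range_zero _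

theorem cdf_succ (n : ℕ) : η.cdf (n + 1) = η.cdf n + η.p n := sum_range_succ _ _

theorem cdf_nonneg (n : ℕ) : 0 ≤ η.cdf n := sum_nonneg fun k _ => η.nonneg k

theorem cdf_le_one (n : ℕ) : η.cdf n ≤ 1 := sum_le_hasSum _ (fun k _ => η.nonneg k) η.total

theorem p_le_one (n : ℕ) : η.p n ≤ 1 := le_hasSum η.total n fun k _ => η.nonneg k

theorem tendsto_cdf : Tendsto η.cdf atTop (𝓝 1) := η.total.tendsto_sum_nat

theorem cdf_eq_one {N : ℕ} (h : ∀ k, N ≤ k → η.p k = 0) : η.cdf N = 1 :=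
  (η.total.unique <| hasSum_sum_of_ne_finset_zero fun k hk => h k (by simpa using hk)).symm

theorem summable_mul_of_le_one {f : ℕ → ℝ} (h0 : ∀ n, 0 ≤ f n) (h1 : ∀ n, f n ≤ 1) :
    Summable fun n => η.p n * f n :=
  η.summable_p.of_nonneg_of_le (fun n => mul_nonneg (η.nonneg n) (h0 n))
    fun n => mul_le_of_le_one_right (η.nonneg n) (h1 n)

theorem tsum_mul_le {f : ℕ → ℝ} {c : ℝ} (hf : Summable fun n => η.p n * f n)
    (h : ∀ n, f n ≤ c) : ∑' n, η.p n * f n ≤ c :=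
  calc ∑' n, η.p n * f n ≤ ∑' n, η.p n * c :=
        hf.tsum_le_tsum (fun n => mul_le_mul_of_nonneg_left (h n) (η.nonneg n))
          (η.summable_p.mul_right c)
    _ = c := by rw [tsum_mul_right, η.total.tsum_eq, one_mul]

/-- `E[(2(Y − N) + 1) · 1{Y ≥ N}]`. -/
noncomputable def overshoot (N : ℕ) : ℝ := ∑' i : ℕ, (2 * i + 1 : ℝ) * η.p (i + N)

theorem summable_overshoot (N : ℕ) : Summable fun i : ℕ => (2 * i + 1 : ℝ) * η.p (i + N) := by
  have h : Summable fun k : ℕ => 2 * ((k : ℝ) * η.p k) + (1 - 2 * N) * η.p k :=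
    (η.finExp.mul_left 2).add (η.summable_p.mul_left _)
  refine ((summable_nat_add_iff N).2 h).congr fun i => ?_
  push_cast
  ring

theorem overshoot_nonneg (N : ℕ) : 0 ≤ η.overshoot N :=
  tsum_nonneg fun _ => mul_nonneg (by positivity) (η.nonneg _)

theorem p_eq_zero_of_overshoot_eq_zero {N k : ℕ} (h : η.overshoot N = 0) (hk : N ≤ k) :
    η.p k = 0 := by
  have hterm : ∀ i : ℕ, 0 ≤ (2 * i + 1 : ℝ) * η.p (i + N) :=
    fun i => mul_nonneg (by positivity) (η.nonneg (i + N))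
  have hsum : HasSum (fun i : ℕ => (2 * i + 1 : ℝ) * η.p (i + N)) 0 :=
    h ▸ (η.summable_overshoot N).hasSum
  have hk' := congrFun ((hasSum_zero_iff_of_nonneg hterm).1 hsum) (k - N)
  rw [Nat.sub_add_cancel hk] at hk'
  exact (mul_eq_zero.1 hk').resolve_left (by positivity)

theorem sum_range_mul_p (N : ℕ) :
    ∑ k ∈ range N, (2 * N - 1 - 2 * k : ℝ) * η.p k = 2 * N - 1 - 2 * η.exp + η.overshoot N := by
  have hs : Summable fun k : ℕ => (2 * N - 1 : ℝ) * η.p k - 2 * ((k : ℝ) * η.p k) :=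
    (η.summable_p.mul_left _).sub (η.finExp.mul_left 2)
  have htsum : ∑' k : ℕ, ((2 * N - 1 : ℝ) * η.p k - 2 * ((k : ℝ) * η.p k)) =
      2 * N - 1 - 2 * η.exp := by
    rw [Summable.tsum_sub (η.summable_p.mul_left _) (η.finExp.mul_left 2), tsum_mul_left,
      tsum_mul_left, η.total.tsum_eq, exp, mul_one]
  have htail : ∑' i : ℕ, ((2 * N - 1 : ℝ) * η.p (i + N) -
      2 * (((i + N : ℕ) : ℝ) * η.p (i + N))) = -η.overshoot N := by
    rw [overshoot, ← tsum_neg]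
    exact tsum_congr fun i => by push_cast; ring
  rw [← hs.sum_add_tsum_nat_add N, htail] at htsum
  rw [← sub_eq_iff_eq_add, ← htsum]
  exact congrArg (· - _) (sum_congr rfl fun k _ => by ring)

noncomputable def dirac (j : ℕ) : Strategy where
  p := deltaFn j
  nonneg n := by unfold deltaFn; split <;> norm_num
  total := hasSum_ite_eq j (1 : ℝ)
  finExp := summable_of_ne_finset_zero (s := {j}) fun n hn => by
    simp [deltaFn, Finset.mem_singleton.not.1 hn]

theorem tsum_dirac_mul (j : ℕ) (f : ℕ → ℝ) : ∑' n, (dirac j).p n * f n = f j := by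
  rw [tsum_eq_single j fun n hn => by simp [dirac, deltaFn, hn]]
  simp [dirac, deltaFn]

end Strategy

section Payoff

variable (v : ℝ) (ξ η : Strategy)

theorem prEq_comm : prEq ξ η = prEq η ξ := tsum_congr fun _ => mul_comm _ _

theorem summable_mul_cdf : Summable fun n => ξ.p n * η.cdf n :=
  ξ.summable_mul_of_le_one η.cdf_nonneg η.cdf_le_one

theorem summable_mul_p : Summable fun n => ξ.p n * η.p n :=
  ξ.summable_mul_of_le_one η.nonneg η.p_le_one

theorem cdf_mul_cdf (N : ℕ) :
    ξ.cdf N * η.cdf N = ∑ n ∈ range N, ξ.p n * η.cdf n + ∑ n ∈ range N, η.p n * ξ.cdf n +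
      ∑ n ∈ range N, ξ.p n * η.p n := by
  induction N with
  | zero => simp [Strategy.cdf_zero]
  | succ N ih =>
    rw [sum_range_succ, sum_range_succ, sum_range_succ, Strategy.cdf_succ, Strategy.cdf_succ]
    linear_combination ih

theorem prGT_add_prGT_add_prEq : prGT ξ η + prGT η ξ + prEq ξ η = 1 := by
  have hlim := (((summable_mul_cdf ξ η).hasSum.tendsto_sum_nat.add
    (summable_mul_cdf η ξ).hasSum.tendsto_sum_nat).add
    (summable_mul_p ξ η).hasSum.tendsto_sum_nat)
  rw [← funext (cdf_mul_cdf ξ η)] at hlim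
  exact (tendsto_nhds_unique hlim (ξ.tendsto_cdf.mul η.tendsto_cdf)).trans (mul_one 1)

noncomputable def bidPayoff (n : ℕ) : ℝ := v * η.cdf n + v / 2 * η.p n - n

theorem payoff_eq_tsum : payoff v ξ η = ∑' n, ξ.p n * bidPayoff v η n := by
  have hcdf := (summable_mul_cdf ξ η).mul_left v
  have hp := (summable_mul_p ξ η).mul_left (v / 2)
  rw [tsum_congr fun n => show ξ.p n * bidPayoff v η n =
      v * (ξ.p n * η.cdf n) + v / 2 * (ξ.p n * η.p n) - n * ξ.p n by unfold bidPayoff; ring,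
    (hcdf.add hp).tsum_sub ξ.finExp, hcdf.tsum_add hp, tsum_mul_left, tsum_mul_left]
  rfl

theorem summable_mul_bidPayoff : Summable fun n => ξ.p n * bidPayoff v η n :=
  (((summable_mul_cdf ξ η).mul_left v).add ((summable_mul_p ξ η).mul_left (v / 2))).sub
    ξ.finExp |>.congr fun n => by unfold bidPayoff; ring

theorem payoff_dirac (j : ℕ) : payoff v (Strategy.dirac j) η = bidPayoff v η j := by
  have hexp : (Strategy.dirac j).exp = j := by
    rw [Strategy.exp]
    simpa only [mul_comm] using Strategy.tsum_dirac_mul j Nat.cast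
  rw [payoff, prGT, prEq, hexp, Strategy.tsum_dirac_mul, Strategy.tsum_dirac_mul]
  rfl

theorem forall_payoff_le_iff (c : ℝ) :
    (∀ ξ', payoff v ξ' η ≤ c) ↔ ∀ n, bidPayoff v η n ≤ c :=
  ⟨fun h n => payoff_dirac v η n ▸ h (Strategy.dirac n), fun h ξ' =>
    payoff_eq_tsum v ξ' η ▸ ξ'.tsum_mul_le (summable_mul_bidPayoff v ξ' η) h⟩

theorem bidPayoff_zero : bidPayoff v η 0 = v / 2 * η.p 0 := by
  simp [bidPayoff, Strategy.cdf_zero]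

theorem bidPayoff_succ (n : ℕ) :
    bidPayoff v η (n + 1) = bidPayoff v η n + v / 2 * (η.p n + η.p (n + 1)) - 1 := by
  simp only [bidPayoff, Strategy.cdf_succ]
  push_cast
  ring

theorem sum_range_bidPayoff (N : ℕ) :
    ∑ n ∈ range N, bidPayoff v η n =
      v / 2 * ∑ k ∈ range N, (2 * N - 1 - 2 * k : ℝ) * η.p k - N * (N - 1) / 2 := by
  induction N with
  | zero => simp
  | succ N ih =>
    have hweights : ∑ k ∈ range (N + 1), (2 * ((N + 1 : ℕ) : ℝ) - 1 - 2 * k) * η.p k =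
        ∑ k ∈ range N, (2 * N - 1 - 2 * k : ℝ) * η.p k + 2 * η.cdf N + η.p N := by
      rw [Strategy.cdf, mul_sum, ← sum_add_distrib, sum_range_succ]
      push_cast
      congr 1
      · exact sum_congr rfl fun k _ => by ring
      · ring
    rw [sum_range_succ, ih, hweights, bidPayoff]
    push_cast
    ring

theorem sum_range_bidPayoff_of_exp_eq {m : ℕ} (hη : η.exp = m) :
    ∑ n ∈ range (2 * m + 1), bidPayoff v η n =
      (2 * m + 1) * (v / 2 - m) + v / 2 * η.overshoot (2 * m + 1) := by
  rw [sum_range_bidPayoff, η.sum_range_mul_p, hη]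
  push_cast
  ring

end Payoff

section ConstantSum

variable {v v1 v2 : ℝ} {ξ η : Strategy}

theorem isNashAPA_iff {X Y : Strategy} :
    IsNashAPA v1 v2 X Y ↔
      (∀ n, bidPayoff v1 Y n ≤ payoff v1 X Y) ∧ ∀ n, bidPayoff v2 X n ≤ payoff v2 Y X := by
  rw [IsNashAPA, forall_payoff_le_iff, forall_payoff_le_iff]

/-- `(payoff v ξ η + ξ.exp) / v = Pr(X > Y) + Pr(X = Y) / 2`. -/
theorem payoff_add_exp_div_add (hv1 : v1 ≠ 0) (hv2 : v2 ≠ 0) :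
    (payoff v1 ξ η + ξ.exp) / v1 + (payoff v2 η ξ + η.exp) / v2 = 1 := by
  rw [payoff, payoff, prEq_comm η ξ]
  field_simp
  linear_combination 2 * v1 * v2 * prGT_add_prGT_add_prEq ξ η

theorem payoffs_eq_of_le (hv1 : 0 < v1) (hv2 : 0 < v2)
    (h1 : payoff v1 ξ η ≤ v1 / 2 - ξ.exp) (h2 : payoff v2 η ξ ≤ v2 / 2 - η.exp) :
    payoff v1 ξ η = v1 / 2 - ξ.exp ∧ payoff v2 η ξ = v2 / 2 - η.exp := by
  have hsum := payoff_add_exp_div_add (ξ := ξ) (η := η) hv1.ne' hv2.ne'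
  have hw1 : (payoff v1 ξ η + ξ.exp) / v1 ≤ 1 / 2 := by rw [div_le_iff₀ hv1]; linarith
  have hw2 : (payoff v2 η ξ + η.exp) / v2 ≤ 1 / 2 := by rw [div_le_iff₀ hv2]; linarith
  have he1 : (payoff v1 ξ η + ξ.exp) / v1 = 1 / 2 := by linarith
  have he2 : (payoff v2 η ξ + η.exp) / v2 = 1 / 2 := by linarith
  rw [div_eq_iff hv1.ne'] at he1
  rw [div_eq_iff hv2.ne'] at he2
  constructor <;> linarith

theorem payoffs_eq_of_ge (hv1 : 0 < v1) (hv2 : 0 < v2)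
    (h1 : v1 / 2 - ξ.exp ≤ payoff v1 ξ η) (h2 : v2 / 2 - η.exp ≤ payoff v2 η ξ) :
    payoff v1 ξ η = v1 / 2 - ξ.exp ∧ payoff v2 η ξ = v2 / 2 - η.exp := by
  have hsum := payoff_add_exp_div_add (ξ := ξ) (η := η) hv1.ne' hv2.ne'
  have hw1 : 1 / 2 ≤ (payoff v1 ξ η + ξ.exp) / v1 := by rw [le_div_iff₀ hv1]; linarith
  have hw2 : 1 / 2 ≤ (payoff v2 η ξ + η.exp) / v2 := by rw [le_div_iff₀ hv2]; linarith
  have he1 : (payoff v1 ξ η + ξ.exp) / v1 = 1 / 2 := by linarith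
  have he2 : (payoff v2 η ξ + η.exp) / v2 = 1 / 2 := by linarith
  rw [div_eq_iff hv1.ne'] at he1
  rw [div_eq_iff hv2.ne'] at he2
  constructor <;> linarith

end ConstantSum

noncomputable def eqBidPMF (v : ℝ) (m n : ℕ) : ℝ :=
  if 2 * m < n then 0 else if Even n then 1 - 2 * m / v else (2 * m + 2) / v - 1

section BestResponse

variable {v : ℝ} {η : Strategy} {m : ℕ}

theorem half_sub_le_of_bidPayoff_le (hv : 0 ≤ v) (hη : η.exp = m) {c : ℝ}
    (h : ∀ n, bidPayoff v η n ≤ c) : v / 2 - m ≤ c := by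
  have hsum : ∑ n ∈ range (2 * m + 1), bidPayoff v η n ≤ (2 * m + 1) * c := by
    simpa using sum_le_sum fun n (_ : n ∈ range (2 * m + 1)) => h n
  rw [sum_range_bidPayoff_of_exp_eq v η hη] at hsum
  have htail := mul_nonneg (by positivity : (0 : ℝ) ≤ v / 2) (η.overshoot_nonneg (2 * m + 1))
  exact le_of_mul_le_mul_left (by linarith) (by positivity : (0 : ℝ) < 2 * m + 1)

theorem p_eq_zero_and_bidPayoff_eq_of_bidPayoff_le (hv : 0 < v) (hη : η.exp = m)
    (h : ∀ n, bidPayoff v η n ≤ v / 2 - m) :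
    (∀ k, 2 * m < k → η.p k = 0) ∧ ∀ n ≤ 2 * m, bidPayoff v η n = v / 2 - m := by
  have hgap : ∀ n ∈ range (2 * m + 1), 0 ≤ v / 2 - m - bidPayoff v η n :=
    fun n _ => sub_nonneg.2 (h n)
  have hbalance : ∑ n ∈ range (2 * m + 1), (v / 2 - m - bidPayoff v η n) +
      v / 2 * η.overshoot (2 * m + 1) = 0 := by
    rw [sum_sub_distrib, sum_const, card_range, nsmul_eq_mul,
      sum_range_bidPayoff_of_exp_eq v η hη]
    push_cast
    ring
  have htail := mul_nonneg (half_pos hv).le (η.overshoot_nonneg (2 * m + 1))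
  have hgap0 := sum_nonneg hgap
  refine ⟨fun k hk => η.p_eq_zero_of_overshoot_eq_zero ?_ hk, fun n hn => ?_⟩
  · exact (mul_eq_zero.1 (by linarith : v / 2 * _ = 0)).resolve_left (half_pos hv).ne'
  · have := (sum_eq_zero_iff_of_nonneg hgap).1 (by linarith) n (mem_range.2 (by omega))
    linarith

theorem eqBidPMF_zero : eqBidPMF v m 0 = 1 - 2 * m / v := by simp [eqBidPMF]

theorem eqBidPMF_add_eqBidPMF_succ (hv : v ≠ 0) {n : ℕ} (hn : n < 2 * m) :
    eqBidPMF v m n + eqBidPMF v m (n + 1) = 2 / v := by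
  have hn' : ¬2 * m < n + 1 := by omega
  simp only [eqBidPMF, hn.not_gt, hn', if_false, Nat.even_add_one]
  split_ifs <;> field_simp <;> ring

theorem p_eq_eqBidPMF_of_bidPayoff_eq (hv : v ≠ 0)
    (h : ∀ n ≤ 2 * m, bidPayoff v η n = v / 2 - m) : ∀ n ≤ 2 * m, η.p n = eqBidPMF v m n := by
  intro n hn
  induction n with
  | zero =>
    have h0 := h 0 (Nat.zero_le _)
    rw [bidPayoff_zero] at h0
    rw [eqBidPMF_zero]
    field_simp
    linarith
  | succ n ih =>
    have hstep := bidPayoff_succ v η n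
    rw [h n (by omega), h (n + 1) hn] at hstep
    have hpair : η.p n + η.p (n + 1) = 2 / v := by
      field_simp
      linarith
    have hsum := eqBidPMF_add_eqBidPMF_succ hv (m := m) (n := n) (by omega)
    linarith [ih (by omega)]

theorem bidPayoff_eq_of_p_eq_eqBidPMF (hv : v ≠ 0) (hp : η.p = eqBidPMF v m) :
    ∀ n ≤ 2 * m, bidPayoff v η n = v / 2 - m := by
  intro n hn
  induction n with
  | zero =>
    rw [bidPayoff_zero, hp, eqBidPMF_zero]
    field_simp
  | succ n ih =>
    rw [bidPayoff_succ, ih (by omega), hp, eqBidPMF_add_eqBidPMF_succ hv (by omega)]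
    field_simp
    ring

theorem bidPayoff_le_half_sub_iff (hv : 0 < v) (hη : η.exp = m) :
    (∀ n, bidPayoff v η n ≤ v / 2 - m) ↔
      (2 * m ≤ v ∧ v ≤ 2 * m + 2) ∧ η.p = eqBidPMF v m := by
  constructor
  · intro h
    obtain ⟨hzero, heq⟩ := p_eq_zero_and_bidPayoff_eq_of_bidPayoff_le hv hη h
    have hp : η.p = eqBidPMF v m := funext fun n => by
      by_cases hn : n ≤ 2 * m
      · exact p_eq_eqBidPMF_of_bidPayoff_eq hv.ne' heq n hn
      · rw [hzero n (by omega), eqBidPMF, if_pos (by omega)]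
    refine ⟨⟨?_, ?_⟩, hp⟩
    · have h0 := η.nonneg 0
      rwa [hp, eqBidPMF_zero, sub_nonneg, div_le_one hv] at h0
    · have htop := h (2 * m + 1)
      rw [bidPayoff, η.cdf_eq_one fun k hk => hzero k (by omega), hzero _ (by omega)] at htop
      push_cast at htop
      linarith
  · rintro ⟨⟨-, hle⟩, hp⟩ n
    by_cases hn : n ≤ 2 * m
    · exact (bidPayoff_eq_of_p_eq_eqBidPMF hv.ne' hp n hn).le
    · have hzero : ∀ k, n ≤ k → η.p k = 0 := fun k hk => by
        rw [hp, eqBidPMF, if_pos (by omega)]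
      have hn' : (2 * m + 1 : ℝ) ≤ n := by exact_mod_cast (by omega : 2 * m + 1 ≤ n)
      rw [bidPayoff, η.cdf_eq_one hzero, hzero n le_rfl]
      linarith

end BestResponse

theorem mix_UO_UE_eq_eqBidPMF {v : ℝ} (hv : v ≠ 0) (m n : ℕ) :
    (2 * (m : ℝ) / v) * ((m : ℝ) + 1 - v / 2) * UO m n +
      (1 - (2 * (m : ℝ) / v) * ((m : ℝ) + 1 - v / 2)) * UE m n = eqBidPMF v m n := by
  unfold UO UE eqBidPMF
  rcases Nat.even_or_odd n with hev | hodd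
  · have hnodd : ¬Odd n := Nat.not_odd_iff_even.2 hev
    by_cases hn : 2 * m < n
    · simp [hnodd, hev, hn, hn.not_ge]
    · simp only [hnodd, hev, hn, false_and, true_and, if_false, if_true, not_lt.1 hn]
      field_simp
      ring
  · have hnev : ¬Even n := Nat.not_even_iff_odd.2 hodd
    by_cases hn : n < 2 * m
    · have hm : (m : ℝ) ≠ 0 := by norm_cast; omega
      simp only [hnev, hodd, hn, false_and, true_and, if_false, if_true, not_lt.2 hn.le]
      field_simp
      ring
    · have hn' : 2 * m < n := by obtain ⟨k, rfl⟩ := hodd; omega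
      simp [hnev, hodd, hn, hn']

theorem natCast_eq_floor_half_iff (v : ℝ) (m : ℕ) :
    (m : ℤ) = ⌊v / 2⌋ ↔ 2 * (m : ℝ) ≤ v ∧ v < 2 * m + 2 := by
  rw [eq_comm, Int.floor_eq_iff]
  push_cast
  constructor <;> rintro ⟨h1, h2⟩ <;> constructor <;> linarith

theorem natCast_eq_ceil_half_sub_one_iff (v : ℝ) (m : ℕ) :
    (m : ℤ) = ⌈v / 2⌉ - 1 ↔ 2 * (m : ℝ) < v ∧ v ≤ 2 * m + 2 := by
  rw [show (m : ℤ) = ⌈v / 2⌉ - 1 ↔ ⌈v / 2⌉ = m + 1 by omega, Int.ceil_eq_iff]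
  push_cast
  constructor <;> rintro ⟨h1, h2⟩ <;> constructor <;> linarith

theorem floor_ceil_conditions_iff {v1 v2 : ℝ} (m : ℕ) (hv : v2 ≤ v1) :
    (((m : ℤ) = ⌊v2 / 2⌋ ∧ (m : ℤ) = ⌊v1 / 2⌋) ∨
      ((m : ℤ) = ⌈v2 / 2⌉ - 1 ∧ (m : ℤ) = ⌈v1 / 2⌉ - 1) ∨
      ((m : ℤ) = ⌊v2 / 2⌋ ∧ (m : ℤ) = ⌈v1 / 2⌉ - 1)) ↔
    2 * (m : ℝ) ≤ v2 ∧ v1 ≤ 2 * m + 2 := by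
  simp only [natCast_eq_floor_half_iff, natCast_eq_ceil_half_sub_one_iff]
  constructor
  · rintro (⟨⟨h1, -⟩, -, h2⟩ | ⟨⟨h1, -⟩, -, h2⟩ | ⟨⟨h1, -⟩, -, h2⟩) <;> constructor <;> linarith
  · rintro ⟨h2, h1⟩
    rcases h1.lt_or_eq with h1 | h1
    · exact Or.inl ⟨⟨h2, by linarith⟩, by linarith, h1⟩
    rcases h2.lt_or_eq with h2 | h2
    · exact Or.inr (Or.inl ⟨⟨h2, by linarith⟩, by linarith, h1.le⟩)
    · exact Or.inr (Or.inr ⟨⟨h2.le, by linarith⟩, by linarith, h1.le⟩)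

theorem allpay_eq_exp_int_general (v1 v2 : ℝ) (hv2 : 0 < v2) (hv : v2 ≤ v1)
    (m : ℕ) (X Y : Strategy)
    (hX : X.exp = (m : ℝ)) (hY : Y.exp = (m : ℝ)) :
    (IsNashAPA v1 v2 X Y ↔
      ((((m : ℤ) = ⌊v2 / 2⌋ ∧ (m : ℤ) = ⌊v1 / 2⌋) ∨
        ((m : ℤ) = ⌈v2 / 2⌉ - 1 ∧ (m : ℤ) = ⌈v1 / 2⌉ - 1) ∨
        ((m : ℤ) = ⌊v2 / 2⌋ ∧ (m : ℤ) = ⌈v1 / 2⌉ - 1)) ∧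
       (∀ n, X.p n = (2 * (m : ℝ) / v2) * ((m : ℝ) + 1 - v2 / 2) * UO m n +
          (1 - (2 * (m : ℝ) / v2) * ((m : ℝ) + 1 - v2 / 2)) * UE m n) ∧
       (∀ n, Y.p n = (2 * (m : ℝ) / v1) * ((m : ℝ) + 1 - v1 / 2) * UO m n +
          (1 - (2 * (m : ℝ) / v1) * ((m : ℝ) + 1 - v1 / 2)) * UE m n))) ∧
    (IsNashAPA v1 v2 X Y →
      payoff v1 X Y = v1 / 2 - (m : ℝ) ∧ payoff v2 Y X = v2 / 2 - (m : ℝ)) := by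
  have hv1 : 0 < v1 := hv2.trans_le hv
  simp only [mix_UO_UE_eq_eqBidPMF hv1.ne', mix_UO_UE_eq_eqBidPMF hv2.ne', ← funext_iff,
    floor_ceil_conditions_iff m hv]
  have hpayoff : IsNashAPA v1 v2 X Y →
      payoff v1 X Y = v1 / 2 - m ∧ payoff v2 Y X = v2 / 2 - m := fun hN => by
    obtain ⟨h1, h2⟩ := isNashAPA_iff.1 hN
    have := payoffs_eq_of_ge hv1 hv2 (hX ▸ half_sub_le_of_bidPayoff_le hv1.le hY h1)
      (hY ▸ half_sub_le_of_bidPayoff_le hv2.le hX h2)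
    rwa [hX, hY] at this
  refine ⟨⟨fun hN => ?_, ?_⟩, hpayoff⟩
  · obtain ⟨h1, h2⟩ := isNashAPA_iff.1 hN
    obtain ⟨hP1, hP2⟩ := hpayoff hN
    obtain ⟨⟨-, hv1le⟩, hYp⟩ := (bidPayoff_le_half_sub_iff hv1 hY).1 (hP1 ▸ h1)
    obtain ⟨⟨hv2ge, -⟩, hXp⟩ := (bidPayoff_le_half_sub_iff hv2 hX).1 (hP2 ▸ h2)
    exact ⟨⟨hv2ge, hv1le⟩, hXp, hYp⟩
  · rintro ⟨⟨hv2ge, hv1le⟩, hXp, hYp⟩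
    have h1 := (bidPayoff_le_half_sub_iff hv1 hY).2 ⟨⟨hv2ge.trans hv, hv1le⟩, hYp⟩
    have h2 := (bidPayoff_le_half_sub_iff hv2 hX).2 ⟨⟨hv2ge, hv.trans hv1le⟩, hXp⟩
    obtain ⟨hP1, hP2⟩ := payoffs_eq_of_le hv1 hv2
      (hX ▸ (forall_payoff_le_iff v1 Y _).2 h1 X) (hY ▸ (forall_payoff_le_iff v2 X _).2 h2 Y)
    rw [hX] at hP1
    rw [hY] at hP2
    exact isNashAPA_iff.2 ⟨hP1 ▸ h1, hP2 ▸ h2⟩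

/-- Proposition 5: equilibria with `E(X) = E(Y) = m`, `m ≥ 1`. -/
theorem allpay_eq_exp_int (v1 v2 : ℝ) (hv2 : 0 < v2) (hv : v2 ≤ v1)
    (m : ℕ) (hm : 1 ≤ m) (X Y : Strategy)
    (hX : X.exp = (m : ℝ)) (hY : Y.exp = (m : ℝ)) :
    (IsNashAPA v1 v2 X Y ↔
      ((((m : ℤ) = ⌊v2 / 2⌋ ∧ (m : ℤ) = ⌊v1 / 2⌋) ∨
        ((m : ℤ) = ⌈v2 / 2⌉ - 1 ∧ (m : ℤ) = ⌈v1 / 2⌉ - 1) ∨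
        ((m : ℤ) = ⌊v2 / 2⌋ ∧ (m : ℤ) = ⌈v1 / 2⌉ - 1)) ∧
       (∀ n, X.p n = (2 * (m : ℝ) / v2) * ((m : ℝ) + 1 - v2 / 2) * UO m n +
          (1 - (2 * (m : ℝ) / v2) * ((m : ℝ) + 1 - v2 / 2)) * UE m n) ∧
       (∀ n, Y.p n = (2 * (m : ℝ) / v1) * ((m : ℝ) + 1 - v1 / 2) * UO m n +
          (1 - (2 * (m : ℝ) / v1) * ((m : ℝ) + 1 - v1 / 2)) * UE m n))) ∧
    (IsNashAPA v1 v2 X Y →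
      payoff v1 X Y = v1 / 2 - (m : ℝ) ∧ payoff v2 Y X = v2 / 2 - (m : ℝ)) :=
  allpay_eq_exp_int_general v1 v2 hv2 hv m X Y hX hY
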